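/- arXiv:1612.03922 — 2 statements merged into one kernel-verified Lean document; each statement's English description precedes it below -/
import Mathlib

section
/- Let π be a reverse plane partition of shape λ and h a rim-hook of λ. If P and P' are both π-compatible paths in λ with ω(P) = ω(P') = ω(h) and ℓ(P) = ℓ(P') = ℓ(h) such that π + P and π + P' are reverse plane partitions, then P = P'. (Uniqueness of the insertion path.) -/
abbrev Cell := ℕ × ℕ

def nC (u : Cell) : Cell := (u.1 - 1, u.2)
def eC (u : Cell) : Cell := (u.1, u.2 + 1)
def sC (u : Cell) : Cell := (u.1 + 1, u.2)
def wC (u : Cell) : Cell := (u.1, u.2 - 1)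
def seC (u : Cell) : Cell := (u.1 + 1, u.2 + 1)

/-- `lam i` is the `i`-th part (1-indexed); weakly decreasing with finitely many nonzero parts. -/
def IsPartition (lam : ℕ → ℕ) : Prop :=
  (∀ i, lam (i + 1) ≤ lam i) ∧ (∃ N, ∀ i, N ≤ i → lam i = 0)

/-- The Young diagram of `lam`: cells `(i,j)` with `1 ≤ i`, `1 ≤ j ≤ lam i`. -/
def cells (lam : ℕ → ℕ) : Set Cell := {u | 1 ≤ u.1 ∧ 1 ≤ u.2 ∧ u.2 ≤ lam u.1}

/-- The conjugate partition. -/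
noncomputable def conj (lam : ℕ → ℕ) (j : ℕ) : ℕ := {i | 1 ≤ i ∧ j ≤ lam i}.ncard

def content (u : Cell) : ℤ := (u.2 : ℤ) - (u.1 : ℤ)

/-- Hook length of the cell `u = (i,j)`: `lam i + lam' j - i - j + 1`. -/
noncomputable def hookLen (lam : ℕ → ℕ) (u : Cell) : ℕ := lam u.1 + conj lam u.2 - u.1 - u.2 + 1

/-- A North-East path in `lam`. -/
def IsNEPath (lam : ℕ → ℕ) (P : List Cell) : Prop :=
  P ≠ [] ∧ (∀ u ∈ P, u ∈ cells lam) ∧ List.Chain' (fun u v => v = nC u ∨ v = eC u) P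

/-- Head of a path. -/
def hd (P : List Cell) : Cell := P.headD (0, 0)
/-- Tail (last cell) of a path. -/
def lst (P : List Cell) : Cell := P.getLastD (0, 0)
/-- Length of a path (number of steps). -/
def len (P : List Cell) : ℕ := P.length - 1

/-- A rim-hook of `lam`. -/
def IsRimHook (lam : ℕ → ℕ) (h : List Cell) : Prop :=
  IsNEPath lam h ∧ sC (hd h) ∉ cells lam ∧ eC (lst h) ∉ cells lam ∧
    ∀ u ∈ h, seC u ∉ cells lam

def IsOuterCorner (lam : ℕ → ℕ) (u : Cell) : Prop :=
  u ∈ cells lam ∧ eC u ∉ cells lam ∧ sC u ∉ cells lam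

def IsInnerCorner (lam : ℕ → ℕ) (u : Cell) : Prop :=
  u ∈ cells lam ∧ eC u ∈ cells lam ∧ sC u ∈ cells lam ∧ seC u ∉ cells lam

def IsCornerContent (lam : ℕ → ℕ) (z : ℤ) : Prop :=
  ∃ v, (IsInnerCorner lam v ∨ IsOuterCorner lam v) ∧ content v = z

/-- Cells whose content is the content of an inner corner. -/
def regionI (lam : ℕ → ℕ) : Set Cell :=
  {u ∈ cells lam | ∃ v, IsInnerCorner lam v ∧ content v = content u}

/-- Cells whose content is the content of an outer corner. -/
def regionO (lam : ℕ → ℕ) : Set Cell :=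
  {u ∈ cells lam | ∃ v, IsOuterCorner lam v ∧ content v = content u}

/-- Cells with `c(u) < o_1` or `i_k < c(u) < o_{k+1}`: the content is not a corner content
and the largest corner content below it (if any) is an inner-corner content. -/
def regionA (lam : ℕ → ℕ) : Set Cell :=
  {u ∈ cells lam | ¬ IsCornerContent lam (content u) ∧
    ∀ w, IsOuterCorner lam w → content w < content u →
      ∃ v, IsInnerCorner lam v ∧ content w < content v ∧ content v < content u}

/-- Cells with `o_k < c(u) < i_k` or `o_{r+1} < c(u)`: the remaining cells. -/
def regionB (lam : ℕ → ℕ) : Set Cell :=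
  cells lam \ (regionI lam ∪ regionO lam ∪ regionA lam)

/-- A reverse plane partition of shape `lam`, as a function vanishing outside `lam`
which is weakly increasing along rows and columns. -/
def IsRPP (lam : ℕ → ℕ) (π : Cell → ℕ) : Prop :=
  (∀ u, u ∉ cells lam → π u = 0) ∧
  (∀ u ∈ cells lam, eC u ∈ cells lam → π u ≤ π (eC u)) ∧
  (∀ u ∈ cells lam, sC u ∈ cells lam → π u ≤ π (sC u))

/-- `π + P`: increase by one along the path. -/
def addPath (π : Cell → ℕ) (P : List Cell) : Cell → ℕ :=
  fun u => if u ∈ P then π u + 1 else π u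

/-- `π - P`: decrease by one along the path. -/
def subPath (π : Cell → ℕ) (P : List Cell) : Cell → ℕ :=
  fun u => if u ∈ P then π u - 1 else π u

/-- The path `P` is `π`-compatible. -/
def Compatible (lam : ℕ → ℕ) (π : Cell → ℕ) (P : List Cell) : Prop :=
  (∀ u ∈ P, u ∈ regionI lam ∪ regionA lam → eC u ∈ P ∧ π (eC u) = π u) ∧
  (∀ u ∈ P, nC u ∈ P → π (nC u) = π u)

/-- `P` witnesses the insertion of the rim-hook `h` into `π`. -/
def InsertPath (lam : ℕ → ℕ) (π : Cell → ℕ) (h P : List Cell) : Prop :=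
  IsNEPath lam P ∧ Compatible lam π P ∧ lst P = lst h ∧ len P = len h ∧
    IsRPP lam (addPath π P)

/-- The rim-hook `h` inserts into `π`. -/
def Inserts (lam : ℕ → ℕ) (h : List Cell) (π : Cell → ℕ) : Prop :=
  ∃ P, InsertPath lam π h P

open Classical in
/-- `h * π`, the insertion of `h` into `π` (equal to `π` if `h` does not insert). -/
noncomputable def insertRH (lam : ℕ → ℕ) (h : List Cell) (π : Cell → ℕ) : Cell → ℕ :=
  if hP : Inserts lam h π then addPath π hP.choose else π

/-- `h₁ * h₂ * ⋯ * h_s * 0`. -/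
noncomputable def insertList (lam : ℕ → ℕ) (hs : List (List Cell)) : Cell → ℕ :=
  hs.foldr (insertRH lam) (fun _ => 0)

/-- Reverse lexicographic order on rim-hooks. -/
def RHle (f h : List Cell) : Prop :=
  content (hd h) < content (hd f) ∨
    (content (hd f) = content (hd h) ∧ content (lst f) ≤ content (lst h))

/-- Reverse lexicographic order on cells. -/
def revlexLE (u v : Cell) : Prop := v.2 < u.2 ∨ (u.2 = v.2 ∧ v.1 ≤ u.1)

/-- Content order on cells: `u ⊴ v`. -/
def contentLE (u v : Cell) : Prop :=
  content v < content u ∨ (content u = content v ∧ v.1 ≤ u.1)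

/-- The set of candidates of `π`. -/
def candidates (lam : ℕ → ℕ) (π : Cell → ℕ) : Set Cell :=
  {u ∈ regionO lam | π (wC u) < π u} ∪
    {u ∈ regionA lam | π (wC u) < π u ∧ π (nC u) < π u}

/-- One step of the path `Q(π,u)`. -/
def QStep (lam : ℕ → ℕ) (π : Cell → ℕ) (v v' : Cell) : Prop :=
  (v ∈ regionO lam ∪ regionB lam ∧ π (nC v) = π v ∧ v' = nC v) ∨
  ((v ∈ regionI lam ∪ regionA lam ∨ (π (nC v) < π v ∧ eC v ∈ cells lam)) ∧ v' = eC v)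

/-- `P` is the path `Q(π,u)`: starts at `u`, follows the `Q`-steps, and terminates
when `π(n v) < π(v)` and `e v ∉ lam`. -/
def IsQPath (lam : ℕ → ℕ) (π : Cell → ℕ) (u : Cell) (P : List Cell) : Prop :=
  P ≠ [] ∧ (∀ v ∈ P, v ∈ cells lam) ∧ hd P = u ∧ List.Chain' (QStep lam π) P ∧
    π (nC (lst P)) < π (lst P) ∧ eC (lst P) ∉ cells lam

/-!
Walk both paths backwards from their common tail. Each path enters a cell `v` from `s v` or
from `w v`. If `P` enters from `w v` and `P'` from `s v`, compatibility of `P'` gives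
`π (s v) = π v`; but `s v ∉ P`, since it has the content of `w v ∈ P`, so
`(π + P) (s v) < (π + P) v`, and `π + P` is not a reverse plane partition.
-/

theorem List.eq_of_getLast_eq_of_getElem_succ {α : Type*} {l l' : List α} (hl : l ≠ [])
    (hl' : l' ≠ []) (hlen : l.length = l'.length) (hlast : l.getLast hl = l'.getLast hl')
    (hstep : ∀ i (hi : i + 1 < l.length) (hi' : i + 1 < l'.length),
      l[i + 1] = l'[i + 1] → l[i] = l'[i]) :
    l = l' := by
  refine List.ext_getElem hlen fun i hi hi' => ?_
  suffices ∀ k i (hi : i < l.length) (hi' : i < l'.length), i + k + 1 = l.length → l[i] = l'[i]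
    from this (l.length - 1 - i) i hi hi' (by omega)
  intro k
  induction k with
  | zero =>
    intro i hi hi' hk
    simp only [List.getLast_eq_getElem] at hlast
    grind
  | succ k ih =>
    intro i hi hi' hk
    exact hstep i (by omega) (by omega) (ih (i + 1) _ _ (by omega))

lemma lst_eq_getLast {P : List Cell} (hP : P ≠ []) : lst P = P.getLast hP := by
  rw [lst, List.getLastD_eq_getLast?, List.getLast?_eq_some_getLast hP]
  rfl

lemma content_lt_of_step {lam : ℕ → ℕ} {u v : Cell} (hu : u ∈ cells lam)
    (h : v = nC u ∨ v = eC u) : content u < content v := by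
  simp only [cells, Set.mem_ofPred_eq] at hu
  rcases h with rfl | rfl <;> simp only [content, nC, eC] <;> omega

lemma eq_sC_or_eq_wC_of_step {lam : ℕ → ℕ} {u v : Cell} (hu : u ∈ cells lam)
    (h : v = nC u ∨ v = eC u) : u = sC v ∨ u = wC v := by
  obtain ⟨a, b⟩ := u
  simp only [cells, Set.mem_ofPred_eq] at hu
  rcases h with rfl | rfl
  · left; simp only [sC, nC, Prod.mk.injEq, and_true]; omega
  · right; simp [wC, eC]

namespace IsNEPath

variable {lam : ℕ → ℕ} {P : List Cell}

lemma eq_of_content_eq (hP : IsNEPath lam P) {u w : Cell} (hu : u ∈ P) (hw : w ∈ P)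
    (huw : content u = content w) : u = w := by
  have hchain : (P.map content).IsChain (· < ·) :=
    (List.isChain_map content).2 <|
      hP.2.2.imp_of_mem_imp fun a _ ha _ hab => content_lt_of_step (hP.2.1 a ha) hab
  exact List.inj_on_of_nodup_map hchain.pairwise.nodup hu hw huw

lemma getElem_eq_sC_or_eq_wC (hP : IsNEPath lam P) (i : ℕ) (hi : i + 1 < P.length) :
    P[i] = sC P[i + 1] ∨ P[i] = wC P[i + 1] :=
  eq_sC_or_eq_wC_of_step (hP.2.1 _ (List.getElem_mem _)) (hP.2.2.getElem i hi)

lemma sC_not_mem_of_wC_mem (hP : IsNEPath lam P) {v : Cell} (hw : wC v ∈ P) : sC v ∉ P := by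
  intro hs
  have hwc := hP.2.1 _ hw
  simp only [cells, wC, Set.mem_ofPred_eq] at hwc
  have := hP.eq_of_content_eq hs hw (by simp only [content, sC, wC]; omega)
  simp only [sC, wC, Prod.mk.injEq] at this
  omega

end IsNEPath

lemma wC_not_mem_of_sC_mem {lam : ℕ → ℕ} {π : Cell → ℕ} {P P' : List Cell}
    (hP : IsNEPath lam P) (hrpp : IsRPP lam (addPath π P)) (hcomp : Compatible lam π P')
    {v : Cell} (hv : v ∈ P) (hv' : v ∈ P') (hs : sC v ∈ P') (hs_cell : sC v ∈ cells lam) :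
    wC v ∉ P := by
  intro hw
  have hnC : nC (sC v) = v := by simp [nC, sC]
  have hπ : π v = π (sC v) := hnC ▸ hcomp.2 (sC v) hs (hnC ▸ hv')
  have hle := hrpp.2.2 v (hP.2.1 v hv) hs_cell
  simp only [addPath, if_pos hv, if_neg (hP.sC_not_mem_of_wC_mem hw)] at hle
  omega

lemma getElem_eq_of_getElem_succ_eq {lam : ℕ → ℕ} {π : Cell → ℕ} {P P' : List Cell}
    (hP : IsNEPath lam P) (hP' : IsNEPath lam P') (hrpp : IsRPP lam (addPath π P))
    (hrpp' : IsRPP lam (addPath π P')) (hcomp : Compatible lam π P)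
    (hcomp' : Compatible lam π P') (i : ℕ) (hi : i + 1 < P.length) (hi' : i + 1 < P'.length)
    (hv : P[i + 1] = P'[i + 1]) :
    P[i] = P'[i] := by
  have hmem := List.getElem_mem (l := P) (Nat.lt_of_succ_lt hi)
  have hmem' := List.getElem_mem (l := P') (Nat.lt_of_succ_lt hi')
  have hvP : P'[i + 1] ∈ P := hv ▸ List.getElem_mem hi
  have hvP' := List.getElem_mem (l := P') hi'
  have hb := hP.getElem_eq_sC_or_eq_wC i hi
  have hb' := hP'.getElem_eq_sC_or_eq_wC i hi'
  rw [hv] at hb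
  rcases hb with hb | hb <;> rcases hb' with hb' | hb'
  · rw [hb, hb']
  · rw [hb] at hmem; rw [hb'] at hmem'
    exact (wC_not_mem_of_sC_mem hP' hrpp' hcomp hvP' hvP hmem (hP.2.1 _ hmem) hmem').elim
  · rw [hb] at hmem; rw [hb'] at hmem'
    exact (wC_not_mem_of_sC_mem hP hrpp hcomp' hvP hvP' hmem' (hP'.2.1 _ hmem') hmem).elim
  · rw [hb, hb']

theorem insertPath_unique_general (lam : ℕ → ℕ) (π : Cell → ℕ) (h : List Cell)
    (P P' : List Cell) (h1 : InsertPath lam π h P) (h2 : InsertPath lam π h P') :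
    P = P' := by
  obtain ⟨hP, hcomp, hlst, hlen, hrpp⟩ := h1
  obtain ⟨hP', hcomp', hlst', hlen', hrpp'⟩ := h2
  refine List.eq_of_getLast_eq_of_getElem_succ hP.1 hP'.1 ?_ ?_
    (getElem_eq_of_getElem_succ_eq hP hP' hrpp hrpp' hcomp hcomp')
  · have := List.length_pos_iff.2 hP.1
    have := List.length_pos_iff.2 hP'.1
    unfold len at hlen hlen'
    omega
  · rw [← lst_eq_getLast, ← lst_eq_getLast, hlst, hlst']

/-- Uniqueness of the insertion path. -/
theorem insertPath_unique (lam : ℕ → ℕ) (hlam : IsPartition lam)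
    (π : Cell → ℕ) (hπ : IsRPP lam π) (h : List Cell) (hh : IsRimHook lam h)
    (P P' : List Cell) (h1 : InsertPath lam π h P) (h2 : InsertPath lam π h P') :
    P = P' :=
  insertPath_unique_general lam π h P P' h1 h2
end

section
/- For a nonzero reverse plane partition π of shape λ, the candidate set C(π) is nonempty. -/
section CandProof

variable {lam : ℕ → ℕ}

lemma lam_anti (hlam : IsPartition lam) {a b : ℕ} (h : a ≤ b) : lam b ≤ lam a :=
  antitone_nat_of_succ_le hlam.1 h

lemma mem_cells' {u : Cell} : u ∈ cells lam ↔ 1 ≤ u.1 ∧ 1 ≤ u.2 ∧ u.2 ≤ lam u.1 := Iff.rfl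

lemma mem_cells_mk {i j : ℕ} : ((i, j) : Cell) ∈ cells lam ↔ 1 ≤ i ∧ 1 ≤ j ∧ j ≤ lam i :=
  Iff.rfl

/-- If `seC x ∈ λ` then `eC x ∈ λ`. -/
lemma lemNB (hlam : IsPartition lam) {x : Cell} (hx : x ∈ cells lam)
    (h : seC x ∈ cells lam) : eC x ∈ cells lam := by
  rw [mem_cells'] at hx
  simp only [seC, eC, mem_cells_mk] at h ⊢
  have hl : lam (x.1 + 1) ≤ lam x.1 := lam_anti hlam (Nat.le_succ _)
  omega

/-- Two cells of the same content with `seC ∉ λ` coincide. -/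
lemma lemU (hlam : IsPartition lam) {x z : Cell} (hx : x ∈ cells lam) (hz : z ∈ cells lam)
    (hc : content x = content z) (hsx : seC x ∉ cells lam) (hsz : seC z ∉ cells lam) :
    x = z := by
  rw [mem_cells'] at hx hz
  simp only [content] at hc
  simp only [seC, mem_cells_mk] at hsx hsz
  rcases lt_trichotomy x.1 z.1 with h | h | h
  · exfalso; apply hsx
    have hl : lam z.1 ≤ lam (x.1 + 1) := lam_anti hlam (by omega)
    omega
  · have h2 : x.2 = z.2 := by omega
    exact Prod.ext_iff.mpr ⟨h, h2⟩
  · exfalso; apply hsz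
    have hl : lam x.1 ≤ lam (z.1 + 1) := lam_anti hlam (by omega)
    omega

/-- Key geometric step: if some cell `y` of content `d-1` has `eC y ∉ λ`,
then every cell `x'` of content `d` has `sC x' ∈ λ`. -/
lemma lemD (hlam : IsPartition lam) {x' y : Cell} (hx' : x' ∈ cells lam) (hy : y ∈ cells lam)
    (hc : content y + 1 = content x') (hey : eC y ∉ cells lam) : sC x' ∈ cells lam := by
  rw [mem_cells'] at hx' hy
  simp only [content] at hc
  simp only [eC, mem_cells_mk] at hey
  simp only [sC, mem_cells_mk]
  rcases le_or_gt y.1 x'.1 with h | h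
  · exfalso; apply hey
    have hl : lam x'.1 ≤ lam y.1 := lam_anti hlam h
    omega
  · have hl : lam y.1 ≤ lam (x'.1 + 1) := lam_anti hlam (by omega)
    omega

/-- Contents between two contents of cells are contents of cells. -/
lemma lemInterval (hlam : IsPartition lam) {y u : Cell} (hy : y ∈ cells lam) (hu : u ∈ cells lam)
    (e : ℤ) (h1 : content y ≤ e) (h2 : e ≤ content u) :
    ∃ z ∈ cells lam, content z = e := by
  rw [mem_cells'] at hy hu
  simp only [content] at h1 h2
  rcases le_or_gt (1 - (u.1 : ℤ)) e with h | h
  · refine ⟨(u.1, (e + u.1).toNat), ?_, ?_⟩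
    · rw [mem_cells_mk]
      refine ⟨hu.1, by omega, ?_⟩
      omega
    · simp only [content]; omega
  · refine ⟨((1 - e).toNat, 1), ?_, ?_⟩
    · rw [mem_cells_mk]
      refine ⟨by omega, le_refl 1, ?_⟩
      have hr : (1 - e).toNat ≤ y.1 := by omega
      calc 1 ≤ y.2 := hy.2.1
        _ ≤ lam y.1 := hy.2.2
        _ ≤ lam (1 - e).toNat := lam_anti hlam hr
    · simp only [content]; omega

/-- Every nonempty diagonal has a bottom cell. -/
lemma lemBottom (hlam : IsPartition lam) {z : Cell} (hz : z ∈ cells lam) :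
    ∃ x ∈ cells lam, content x = content z ∧ seC x ∉ cells lam := by
  obtain ⟨N, hN⟩ := hlam.2
  have key : ∀ k : ℕ, ∀ w : Cell, w ∈ cells lam → content w = content z → N - w.1 ≤ k →
      ∃ x ∈ cells lam, content x = content z ∧ seC x ∉ cells lam := by
    intro k
    induction k with
    | zero =>
      intro w hw hc hk
      exfalso
      rw [mem_cells'] at hw
      have h0 : lam w.1 = 0 := hN w.1 (by omega)
      omega
    | succ n ih =>
      intro w hw hc hk
      by_cases hse : seC w ∈ cells lam
      · refine ih (seC w) hse ?_ ?_
        · simp only [content, seC] at hc ⊢; push_cast; omega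
        · simp only [seC]; omega
      · exact ⟨w, hw, hc, hse⟩
  exact key (N - z.1) z hz rfl le_rfl

/-- If some cell of content `d - 1` has no East neighbour, then no cell of content `d`
is in region A. -/
lemma lemB (hlam : IsPartition lam) {y u : Cell} (hy : y ∈ cells lam) (hey : eC y ∉ cells lam)
    (hu : u ∈ cells lam) (hc : content u = content y + 1) : u ∉ regionA lam := by
  classical
  intro hA
  obtain ⟨N, hN⟩ := hlam.2
  set d := content u with hd
  have hPd : (fun c => c ≤ d - 1 ∧ ∀ c', c ≤ c' → c' ≤ d - 1 →
      ∃ x ∈ cells lam, content x = c' ∧ eC x ∉ cells lam) (d - 1) := by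
    refine ⟨le_refl _, fun c' h1 h2 => ⟨y, hy, by omega, hey⟩⟩
  have hbdd : ∃ b : ℤ, ∀ z, (fun c => c ≤ d - 1 ∧ ∀ c', c ≤ c' → c' ≤ d - 1 →
      ∃ x ∈ cells lam, content x = c' ∧ eC x ∉ cells lam) z → b ≤ z := by
    refine ⟨2 - N, fun z hz => ?_⟩
    obtain ⟨x, hx, hcx, _⟩ := hz.2 z le_rfl hz.1
    rw [mem_cells'] at hx
    have hxN : x.1 < N := by
      by_contra h
      have := hN x.1 (by omega)
      omega
    simp only [content] at hcx; omega
  obtain ⟨o, hPo, hleast⟩ := Int.exists_least_of_bdd hbdd ⟨d - 1, hPd⟩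
  obtain ⟨x₀, hx₀, hcx₀, hex₀⟩ := hPo.2 o le_rfl hPo.1
  have hseC : seC x₀ ∉ cells lam := fun h => hex₀ (lemNB hlam hx₀ h)
  have hsx₀ : sC x₀ ∉ cells lam := by
    intro hs
    have hPo' : (fun c => c ≤ d - 1 ∧ ∀ c', c ≤ c' → c' ≤ d - 1 →
        ∃ x ∈ cells lam, content x = c' ∧ eC x ∉ cells lam) (o - 1) := by
      refine ⟨by omega, fun c' h1 h2 => ?_⟩
      rcases eq_or_lt_of_le h1 with h | h
      · refine ⟨sC x₀, hs, ?_, ?_⟩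
        · simp only [content, sC] at hcx₀ ⊢; push_cast; omega
        · have he : eC (sC x₀) = seC x₀ := rfl
          rw [he]; exact hseC
      · exact hPo.2 c' (by omega) h2
    have := hleast _ hPo'
    omega
  have houter : IsOuterCorner lam x₀ := ⟨hx₀, hex₀, hsx₀⟩
  obtain ⟨v, hvI, hv1, hv2⟩ := hA.2.2 x₀ houter (by omega)
  obtain ⟨x, hx, hcx, hex⟩ := hPo.2 (content v) (by omega) (by omega)
  have hxv : x = v :=
    lemU hlam hx hvI.1 (by omega) (fun h => hex (lemNB hlam hx h)) hvI.2.2.2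
  rw [hxv] at hex
  exact hex hvI.2.1

/-- If every cell of content `d-1` has an East neighbour, then cells of content `d`
are in region O or A. -/
lemma lemA (hlam : IsPartition lam) {u : Cell} (hu : u ∈ cells lam)
    (hg : ∀ x, x ∈ cells lam → content x + 1 = content u → eC x ∈ cells lam) :
    u ∈ regionO lam ∪ regionA lam := by
  classical
  by_cases hO : ∃ v, IsOuterCorner lam v ∧ content v = content u
  · exact Or.inl ⟨hu, hO⟩
  · refine Or.inr ⟨hu, ?_, ?_⟩
    · rintro ⟨v, hv | hv, hcv⟩
      · have h1 : sC v ∈ cells lam := hv.2.2.1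
        have h2 : content (sC v) + 1 = content u := by
          simp only [content, sC] at hcv ⊢; push_cast; omega
        have h3 := hg (sC v) h1 h2
        have he : eC (sC v) = seC v := rfl
        rw [he] at h3
        exact hv.2.2.2 h3
      · exact hO ⟨v, hv, hcv⟩
    · intro w hw hwd
      by_contra hno
      set o := content w with ho
      set d := content u with hd
      have claim : ∀ k : ℕ, o + k ≤ d - 1 →
          ∃ x ∈ cells lam, content x = o + k ∧ eC x ∉ cells lam := by
        intro k
        induction k with
        | zero => intro _; exact ⟨w, hw.1, by omega, hw.2.1⟩
        | succ n ih =>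
          intro hle
          obtain ⟨y, hy, hcy, hey⟩ := ih (by push_cast at hle ⊢; omega)
          obtain ⟨z, hz, hcz⟩ := lemInterval hlam hy hu (o + n + 1) (by omega) (by omega)
          obtain ⟨x', hx', hcx', hsex'⟩ := lemBottom hlam hz
          rw [hcz] at hcx'
          by_cases hex' : eC x' ∈ cells lam
          · exfalso
            have hsx' : sC x' ∈ cells lam := lemD hlam hx' hy (by omega) hey
            have hinner : IsInnerCorner lam x' := ⟨hx', hex', hsx', hsex'⟩
            exact hno ⟨x', hinner, by omega, by omega⟩
          · exact ⟨x', hx', by push_cast; omega, hex'⟩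
      obtain ⟨y, hy, hcy, hey⟩ := claim (d - 1 - o).toNat (by omega)
      have hcy' : content y + 1 = d := by omega
      exact hey (hg y hy hcy')

/-- Region A cells: every cell of the same content has an East neighbour. -/
lemma lemC (hlam : IsPartition lam) {u x : Cell} (hA : u ∈ regionA lam)
    (hx : x ∈ cells lam) (hc : content x = content u) : eC x ∈ cells lam := by
  by_contra hex
  have hse : seC x ∉ cells lam := fun h => hex (lemNB hlam hx h)
  by_cases hs : sC x ∈ cells lam
  · have h1 : eC (sC x) = seC x := rfl
    have h2 : u ∉ regionA lam := by
      refine lemB hlam hs (h1 ▸ hse) hA.1 ?_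
      simp only [content, sC] at hc ⊢; push_cast; omega
    exact h2 hA
  · exact hA.2.1 ⟨x, Or.inr ⟨hx, hex, hs⟩, hc⟩

/-- The walk: from a cell in O ∪ A with positive value and zero West neighbour,
a candidate exists. -/
lemma walk (hlam : IsPartition lam) {π : Cell → ℕ} (hπ : IsRPP lam π) :
    ∀ r : ℕ, ∀ v, v ∈ cells lam → v.1 ≤ r → π v ≠ 0 → π (wC v) = 0 →
      v ∈ regionO lam ∪ regionA lam → (candidates lam π).Nonempty := by
  intro r
  induction r with
  | zero => intro v hv hr _ _ _; exact absurd hv.1 (by omega)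
  | succ n ih =>
    intro v hv hr hvne hw0 hreg
    have hpos : 0 < π v := Nat.pos_of_ne_zero hvne
    rcases hreg with hO | hA
    · exact ⟨v, Or.inl ⟨hO, by rw [hw0]; exact hpos⟩⟩
    · by_cases hn : π (nC v) < π v
      · exact ⟨v, Or.inr ⟨hA, by rw [hw0]; exact hpos, hn⟩⟩
      · have hv' := hv
        rw [mem_cells'] at hv'
        have h2 : 2 ≤ v.1 := by
          by_contra h1
          have hv1 : v.1 = 1 := by omega
          apply hn
          have hnot : nC v ∉ cells lam := by
            simp only [nC, hv1, mem_cells_mk]; omega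
          rw [hπ.1 _ hnot]; exact hpos
        have hnc : nC v ∈ cells lam := by
          simp only [nC, mem_cells_mk]
          have hl : lam (v.1 - 1) ≥ lam v.1 := lam_anti hlam (by omega)
          omega
        have hsnc : sC (nC v) = v := by
          simp only [sC, nC]
          rw [Nat.sub_add_cancel (by omega)]
        have hle : π (nC v) ≤ π v := by
          have hh := hπ.2.2 (nC v) hnc (by rw [hsnc]; exact hv)
          rwa [hsnc] at hh
        have heq : π (nC v) = π v := le_antisymm hle (not_lt.mp hn)
        have hwz : π (wC (nC v)) = 0 := by
          by_cases hv2 : v.2 = 1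
          · apply hπ.1
            simp only [wC, nC, hv2, mem_cells_mk]; omega
          · have hv2' : 2 ≤ v.2 := by omega
            have hwv : wC v ∈ cells lam := by
              simp only [wC, mem_cells_mk]; omega
            have hmem : wC (nC v) ∈ cells lam := by
              simp only [wC, nC, mem_cells_mk]
              have hl : lam (v.1 - 1) ≥ lam v.1 := lam_anti hlam (by omega)
              omega
            have hswn : sC (wC (nC v)) = wC v := by
              simp only [sC, wC, nC]
              rw [Nat.sub_add_cancel (by omega)]
            have hh := hπ.2.2 (wC (nC v)) hmem (by rw [hswn]; exact hwv)
            rw [hswn, hw0] at hh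
            omega
        have hcn : content (nC v) = content v + 1 := by
          simp only [content, nC]
          omega
        have hreg' : nC v ∈ regionO lam ∪ regionA lam := by
          refine lemA hlam hnc (fun x hx hcx => ?_)
          exact lemC hlam hA hx (by omega)
        refine ih (nC v) hnc (by simp only [nC]; omega) (by rw [heq]; exact hvne) hwz hreg'

end CandProof

/-- A nonzero reverse plane partition has a candidate. -/
theorem candidates_nonempty (lam : ℕ → ℕ) (hlam : IsPartition lam)
    (π : Cell → ℕ) (hπ : IsRPP lam π) (hne : ∃ u, π u ≠ 0) :
    (candidates lam π).Nonempty := by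
  classical
  obtain ⟨N, hN⟩ := hlam.2
  obtain ⟨v₀, hv₀⟩ := hne
  have hv₀c : v₀ ∈ cells lam := by
    by_contra h; exact hv₀ (hπ.1 v₀ h)
  have hbdd : ∃ b : ℤ, ∀ z : ℤ, (∃ v, v ∈ cells lam ∧ π v ≠ 0 ∧ content v = z) → b ≤ z := by
    refine ⟨2 - N, fun z ⟨v, hv, _, hc⟩ => ?_⟩
    have hxN : v.1 < N := by
      by_contra h
      have := hN v.1 (by omega)
      obtain ⟨a, b, c⟩ := hv; omega
    obtain ⟨a, b, c'⟩ := hv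
    simp only [content] at hc; omega
  obtain ⟨c, ⟨u₀, hu₀, hu₀ne, hu₀c⟩, hleast⟩ :=
    Int.exists_least_of_bdd hbdd ⟨content v₀, v₀, hv₀c, hv₀, rfl⟩
  have Z : ∀ x : Cell, content x < c → π x = 0 := by
    intro x hx
    by_contra h
    have hxc : x ∈ cells lam := by by_contra h'; exact h (hπ.1 x h')
    exact absurd (hleast (content x) ⟨x, hxc, h, rfl⟩) (by omega)
  have hs0 : sC u₀ ∉ cells lam := by
    intro h
    have h1 := hπ.2.2 u₀ hu₀ h
    have h2 : content (sC u₀) < c := by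
      simp only [content] at hu₀c
      simp only [content, sC]; push_cast; omega
    rw [Z _ h2] at h1
    exact hu₀ne (by omega)
  have hw0 : π (wC u₀) = 0 := by
    apply Z
    have h1 : 1 ≤ u₀.2 := hu₀.2.1
    simp only [content] at hu₀c
    simp only [content, wC]
    omega
  have hgood : ∀ x, x ∈ cells lam → content x + 1 = content u₀ → eC x ∈ cells lam := by
    intro x hx hcx
    by_contra hex
    exact hs0 (lemD hlam hu₀ hx hcx hex)
  exact walk hlam hπ u₀.1 u₀ hu₀ le_rfl hu₀ne hw0 (lemA hlam hu₀ hgood)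
end
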